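/- arXiv:1405.3927 — 4 statements merged into one kernel-verified Lean document; each statement's English description precedes it below -/
import Mathlib

section
/- Let R be a commutative ring and let a, a', a'', b, b', b'', c, c', c'', d, d', d'' be elements of R, and form the 2×2×2 compound hypermatrix whose eight entries are 2×2 determinants following Cayley's compound pattern (e.g. a000 = det[[a,a''],[b,b'']], a001 = det[[a',a''],[d',d'']]). Then the Cayley hyperdeterminant of this compound hypermatrix, namely ( det[[det[[a,a''],[b,b'']], det[[a',a''],[d',d'']]],[det[[c,c''],[b,b'']], det[[c',c''],[d',d'']]]] + det[[det[[a',a''],[b',b'']], det[[a,a''],[d,d'']]],[det[[c',c''],[b',b'']], det[[c,c''],[d,d'']]]] )^2 − 4·det[[det[[a,a''],[b,b'']], det[[a,a''],[d,d'']]],[det[[c,c''],[b,b'']], det[[c,c''],[d,d'']]]]·det[[det[[a',a''],[b',b'']], det[[a',a''],[d',d'']]],[det[[c',c''],[b',b'']], det[[c',c''],[d',d'']]]], equals the perfect square ( det[[det[[a,a''],[c,c'']], det[[b,b''],[d,d'']]],[det[[a',a''],[c',c'']], det[[b',b''],[d',d'']]]] )^2. -/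
/-- Compound theorem for Cayley's 2×2×2 hyperdeterminant: with entries given by
2×2 determinants following Cayley's compound pattern, the hyperdeterminant is a
perfect square. Here `det2 x y z w = x*w - y*z`. -/
theorem compound_hyperdeterminant {R : Type*} [CommRing R]
    (a a' a'' b b' b'' c c' c'' d d' d'' : R) :
    ((((a * b'' - a'' * b) * (c' * d'' - c'' * d') -
        (a' * d'' - a'' * d') * (c * b'' - c'' * b)) +
      ((a' * b'' - a'' * b') * (c * d'' - c'' * d) -
        (a * d'' - a'' * d) * (c' * b'' - c'' * b'))) ^ 2 -
      4 * ((a * b'' - a'' * b) * (c * d'' - c'' * d) -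
            (a * d'' - a'' * d) * (c * b'' - c'' * b)) *
          ((a' * b'' - a'' * b') * (c' * d'' - c'' * d') -
            (a' * d'' - a'' * d') * (c' * b'' - c'' * b'))) =
    ((a * c'' - a'' * c) * (b' * d'' - b'' * d') -
      (b * d'' - b'' * d) * (a' * c'' - a'' * c')) ^ 2 := by
  ring
end

section
/- Let R be a commutative ring in which 4 is invertible (e.g. a field of characteristic ≠ 2), let g2, g3 ∈ R, and define r(x) = 4x³ − g2·x − g3 and the symmetric triquadratic H(u,v,a) = (uv + au + av + g2/4)² − (4auv − g3)(u + v + a). Then for all u, v, a ∈ R: [r(u) + r(a) − 4(u−a)²(u+v+a)]² − 4·r(u)·r(a) = 16·(u−a)²·H(u,v,a). -/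
/-- Relation between the Weierstrass cubic `r` and the symmetric triquadratic `H`:
`[r(u)+r(a)-4(u-a)²(u+v+a)]² - 4 r(u) r(a) = 16 (u-a)² H(u,v,a)`. -/
theorem triquadratic_relation {F : Type*} [Field F] (h2 : (2 : F) ≠ 0)
    (g2 g3 u v a : F) :
    ((4 * u ^ 3 - g2 * u - g3) + (4 * a ^ 3 - g2 * a - g3) -
        4 * (u - a) ^ 2 * (u + v + a)) ^ 2 -
      4 * (4 * u ^ 3 - g2 * u - g3) * (4 * a ^ 3 - g2 * a - g3) =
    16 * (u - a) ^ 2 *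
      ((u * v + a * u + a * v + g2 / 4) ^ 2 -
        (4 * a * u * v - g3) * (u + v + a)) := by
  have h4 : (4 : F) ≠ 0 := by
    intro h; apply h2; have : (2 : F) * 2 = 0 := by linear_combination h
    rcases mul_eq_zero.mp this with h | h <;> exact h
  field_simp
  ring
end

section
/- Let F be a field of characteristic zero, g2, g3 ∈ F, r(x) = 4x³ − g2·x − g3, and H(u,v,a) = (uv + au + av + g2/4)² − (4auv − g3)(u+v+a). Then, viewing H as a polynomial in v with coefficients depending on u and a, the discriminant-type expression H_v² − 2·H·H_vv equals r(a)·r(u), where H_v and H_vv denote the first and second partial derivatives of H with respect to v. -/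
open Polynomial

set_option maxHeartbeats 2000000 in
/-- The discriminant-type expression `H_v² - 2 H H_vv` of the triquadratic
`H(u,v,a)`, viewed as a polynomial in `v`, equals `r(a) r(u)`. -/
theorem triquadratic_discriminant {F : Type*} [Field F] [CharZero F]
    (g2 g3 u v a : F) :
    let Hp : Polynomial F :=
      (C (u + a) * X + C (a * u + g2 / 4)) ^ 2 -
        (C (4 * a * u) * X - C g3) * (X + C (u + a))
    (Hp.derivative.eval v) ^ 2 -
      2 * (Hp.eval v) * (Hp.derivative.derivative.eval v) =
    (4 * a ^ 3 - g2 * a - g3) * (4 * u ^ 3 - g2 * u - g3) := by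
  intro Hp
  simp only [Hp, derivative_sub, derivative_pow, derivative_mul, derivative_add,
    derivative_C, derivative_X, eval_sub, eval_mul, eval_add, eval_pow, eval_C, eval_X,
    eval_natCast, Nat.cast_ofNat, eval_ofNat, zero_mul, mul_one, one_mul, add_zero,
    zero_add, mul_zero, sub_zero, pow_one, derivative_ofNat, derivative_one]
  ring
end

section
/- Let F be a field of characteristic ≠ 2, g2, g3 ∈ F, r(x) = 4x³ − g2·x − g3, and H(u,v,a) = (uv + au + av + g2/4)² − (4auv − g3)(u+v+a). Let u, v, a, U, V ∈ F with U² = r(u), V² = r(v), and u ≠ v. Then H(u,v,a) = (u−v)²·[ (1/4)·((U−V)/(u−v))² − (u+v+a) ]·[ (1/4)·((U+V)/(u−v))² − (u+v+a) ]. -/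
/-!
Write `d = u - v` and `s = u + v + a`. Clearing denominators, the right-hand side is
`((U - V)² - 4sd²)((U + V)² - 4sd²) / (16d²)`. Multiplying the two conjugate factors out leaves
only `U² - V² = r(u) - r(v)` and `U² + V² = r(u) + r(v)`, and `r(u) - r(v)` is divisible by `d`,
so the `d²` cancels and what remains is a polynomial identity in `u, v, a, g2, g3`.
-/

section CommRing

variable {R : Type*} [CommRing R]

def weierstrassCubic (g2 g3 x : R) : R := 4 * x ^ 3 - g2 * x - g3

lemma weierstrassCubic_sub_weierstrassCubic (g2 g3 u v : R) :
    weierstrassCubic g2 g3 u - weierstrassCubic g2 g3 v =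
      (u - v) * (4 * (u ^ 2 + u * v + v ^ 2) - g2) := by
  unfold weierstrassCubic; ring

lemma conjugate_factors_mul {g2 g3 u v U V : R} (s : R)
    (hU : U ^ 2 = weierstrassCubic g2 g3 u) (hV : V ^ 2 = weierstrassCubic g2 g3 v) :
    ((U - V) ^ 2 - 4 * s * (u - v) ^ 2) * ((U + V) ^ 2 - 4 * s * (u - v) ^ 2) =
      (u - v) ^ 2 * ((4 * (u ^ 2 + u * v + v ^ 2) - g2) ^ 2
        - 8 * s * (weierstrassCubic g2 g3 u + weierstrassCubic g2 g3 v)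
        + 16 * s ^ 2 * (u - v) ^ 2) := by
  calc ((U - V) ^ 2 - 4 * s * (u - v) ^ 2) * ((U + V) ^ 2 - 4 * s * (u - v) ^ 2)
      = (U ^ 2 - V ^ 2) ^ 2 - 8 * s * (u - v) ^ 2 * (U ^ 2 + V ^ 2)
          + 16 * s ^ 2 * (u - v) ^ 4 := by ring
    _ = _ := by rw [hU, hV, weierstrassCubic_sub_weierstrassCubic]; ring

end CommRing

lemma sixteen_mul_triquadratic {F : Type*} [Field F] (h4 : (4 : F) ≠ 0) (g2 g3 u v a : F) :
    16 * ((u * v + a * u + a * v + g2 / 4) ^ 2 - (4 * a * u * v - g3) * (u + v + a)) =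
      (4 * (u ^ 2 + u * v + v ^ 2) - g2) ^ 2
        - 8 * (u + v + a) * (weierstrassCubic g2 g3 u + weierstrassCubic g2 g3 v)
        + 16 * (u + v + a) ^ 2 * (u - v) ^ 2 := by
  have hq : 4 * (g2 / 4) = g2 := mul_div_cancel₀ g2 h4
  unfold weierstrassCubic
  linear_combination (8 * (u * v + a * u + a * v) + 4 * (g2 / 4) + g2) * hq

lemma sq_mul_four_mul_quarter_div_sq_sub {F : Type*} [Field F] (h4 : (4 : F) ≠ 0)
    {d : F} (hd : d ≠ 0) (W s : F) :
    d ^ 2 * (4 * ((1 / 4) * (W / d) ^ 2 - s)) = W ^ 2 - 4 * s * d ^ 2 := by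
  field_simp

/-- Factorised form of the triquadratic `H(u,v,a)` in terms of square roots
`U, V` of `r(u), r(v)`. -/
theorem triquadratic_factorisation {F : Type*} [Field F] (h2 : (2 : F) ≠ 0)
    (g2 g3 u v a U V : F)
    (hU : U ^ 2 = 4 * u ^ 3 - g2 * u - g3)
    (hV : V ^ 2 = 4 * v ^ 3 - g2 * v - g3)
    (huv : u ≠ v) :
    (u * v + a * u + a * v + g2 / 4) ^ 2 -
      (4 * a * u * v - g3) * (u + v + a) =
    (u - v) ^ 2 *
      ((1 / 4) * ((U - V) / (u - v)) ^ 2 - (u + v + a)) *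
      ((1 / 4) * ((U + V) / (u - v)) ^ 2 - (u + v + a)) := by
  have hd : u - v ≠ 0 := sub_ne_zero.mpr huv
  have h4 : (4 : F) ≠ 0 := by simpa [show (4 : F) = 2 ^ 2 by norm_num] using pow_ne_zero 2 h2
  apply mul_left_cancel₀ (mul_ne_zero (mul_ne_zero h4 h4) (pow_ne_zero 2 hd))
  set s := u + v + a
  calc 4 * 4 * (u - v) ^ 2 * ((u * v + a * u + a * v + g2 / 4) ^ 2 - (4 * a * u * v - g3) * s)
      = (u - v) ^ 2 * (16 * ((u * v + a * u + a * v + g2 / 4) ^ 2 - (4 * a * u * v - g3) * s)) := by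
        ring
    _ = ((U - V) ^ 2 - 4 * s * (u - v) ^ 2) * ((U + V) ^ 2 - 4 * s * (u - v) ^ 2) := by
        rw [sixteen_mul_triquadratic h4, conjugate_factors_mul s hU hV]
    _ = ((u - v) ^ 2 * (4 * ((1 / 4) * ((U - V) / (u - v)) ^ 2 - s))) *
          ((u - v) ^ 2 * (4 * ((1 / 4) * ((U + V) / (u - v)) ^ 2 - s))) := by
        rw [sq_mul_four_mul_quarter_div_sq_sub h4 hd, sq_mul_four_mul_quarter_div_sq_sub h4 hd]
    _ = _ := by ring
end
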